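/- Let (P_t) be a uniformly integrable càdlàg martingale with terminal value P_∞ distributed according to μ (μ with finite first moment). Then for every y with 0 < y < r_μ, P(sup_t P_t ≥ y) ≤ inf_{K < y} C_μ(K)/(y − K) = μ^HL([y,∞)). (Blackwell–Dubins / Azéma–Yor maximal inequality.) -/

import Mathlib

/-!
Write `q` for the tail quantile of `μ`. For the maximal inequality fix `K < y' < y`. The process
`(P_t - K)⁺` is dominated by `E[(P_∞ - K)⁺ | 𝒢_t]`, so integrating over the first-entry events
`{P_t > y'}` along a finite set of times gives `P(sup P > y') ≤ C_μ(K) / (y' - K)` (Doob's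
argument). Right-continuity reduces the supremum to a countable dense set of times, and then we
let `y' ↑ y`.

For the identity, Lebesgue measure on `(0,1)` pushed forward by `q` is `μ`, so
`C_μ(K) = ∫₀¹ (q - K)⁺`. Hence `AVaR(l) = min_K (K + C_μ(K) / l)`, with the minimum attained at
`K = q(l)`. It follows that `y ≤ AVaR(l)` iff `l ≤ inf_{K<y} C_μ(K) / (y - K)`, so the
`μ^HL`-mass of `[y, ∞)` is the length of an interval.
-/

open MeasureTheory Set Filter Topology
open scoped NNReal

/-- Tail function `μ([x,∞))`. -/
noncomputable def tailFn (μ : Measure ℝ) (x : ℝ) : ℝ := (μ (Ici x)).toReal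

/-- Tail quantile function: left-continuous inverse of the tail function. -/
noncomputable def tailQ (μ : Measure ℝ) (l : ℝ) : ℝ := sInf {x : ℝ | tailFn μ x < l}

/-- Call function `C_μ(K) = ∫ (s-K)⁺ μ(ds)`. -/
noncomputable def callFn (μ : Measure ℝ) (K : ℝ) : ℝ := ∫ s, max (s - K) 0 ∂μ

/-- Average Value at Risk at level `l`. -/
noncomputable def avar (μ : Measure ℝ) (l : ℝ) : ℝ := (1 / l) * ∫ u in (0 : ℝ)..l, tailQ μ u

/-- Hardy–Littlewood transform of `μ`: the law of `AVaR_μ(ξ)` for `ξ` uniform on `[0,1]`. -/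
noncomputable def hlTransform (μ : Measure ℝ) : Measure ℝ :=
  Measure.map (avar μ) (volume.restrict (Ioc (0 : ℝ) 1))

lemma volume_restrict_Ioo_apply_eq_ofReal {A : Set ℝ} {a : ℝ} (ha : a ≤ 1)
    (hA : ∀ u ∈ Ioo (0 : ℝ) 1, u ∈ A ↔ u ≤ a) :
    volume.restrict (Ioo 0 1) A = ENNReal.ofReal a := by
  rw [Measure.restrict_apply' measurableSet_Ioo]
  have h₁ : Ioo 0 a ⊆ A ∩ Ioo 0 1 := fun u hu =>
    ⟨(hA u ⟨hu.1, hu.2.trans_le ha⟩).2 hu.2.le, hu.1, hu.2.trans_le ha⟩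
  have h₂ : A ∩ Ioo 0 1 ⊆ Icc 0 a := fun u hu => ⟨hu.2.1.le, (hA u hu.2).1 hu.1⟩
  refine le_antisymm ((measure_mono h₂).trans_eq ?_) ((measure_mono h₁).trans_eq' ?_) <;>
    simp [Real.volume_Icc, Real.volume_Ioo]

lemma callFn_map {α : Type*} [MeasurableSpace α] {ν : Measure α} {Y : α → ℝ}
    (hY : AEMeasurable Y ν) (K : ℝ) : callFn (ν.map Y) K = ∫ x, max (Y x - K) 0 ∂ν :=
  integral_map hY (by fun_prop : Continuous fun s : ℝ => max (s - K) 0).aestronglyMeasurable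

lemma callFn_nonneg (μ : Measure ℝ) (K : ℝ) : 0 ≤ callFn μ K :=
  integral_nonneg fun _ => le_max_right _ _

section Quantile
variable (μ : Measure ℝ) [IsProbabilityMeasure μ]

lemma antitone_tailFn : Antitone (tailFn μ) := fun _ _ hab =>
  ENNReal.toReal_mono (measure_ne_top μ _) (measure_mono (Ici_subset_Ici.2 hab))

lemma tailFn_le_one (x : ℝ) : tailFn μ x ≤ 1 := by
  simpa [tailFn] using
    ENNReal.toReal_mono (measure_ne_top μ univ) (measure_mono (subset_univ (Ici x)))

lemma tendsto_tailFn_atBot : Tendsto (tailFn μ) atBot (𝓝 1) := by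
  have h := (ENNReal.tendsto_toReal (measure_ne_top μ univ)).comp (tendsto_measure_Ici_atBot μ)
  rwa [measure_univ, ENNReal.toReal_one] at h

lemma tendsto_tailFn_atTop : Tendsto (tailFn μ) atTop (𝓝 0) := by
  have h := tendsto_measure_iInter_atTop (μ := μ) (fun x => measurableSet_Ici.nullMeasurableSet)
    (antitone_Ici (α := ℝ)) ⟨0, measure_ne_top μ _⟩
  have hI : (⋂ x : ℝ, Ici x) = ∅ :=
    eq_empty_of_forall_notMem fun x hx => (lt_add_one x).not_ge (mem_iInter.1 hx (x + 1))
  rw [hI, measure_empty] at h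
  exact (ENNReal.tendsto_toReal ENNReal.zero_ne_top).comp h

lemma tendsto_tailFn_nhdsLT (x : ℝ) : Tendsto (tailFn μ) (𝓝[<] x) (𝓝 (tailFn μ x)) := by
  have h := tendsto_measure_biInter_gt (μ := μ) (ι := ℝᵒᵈ) (s := fun r => Ici (OrderDual.ofDual r))
    (a := OrderDual.toDual x) (fun _ _ => measurableSet_Ici.nullMeasurableSet)
    (fun _ _ _ hij => Ici_subset_Ici.2 hij)
    ⟨OrderDual.toDual (x - 1), OrderDual.toDual_lt_toDual.2 (by linarith), measure_ne_top μ _⟩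
  have hI : (⋂ r > OrderDual.toDual x, Ici (OrderDual.ofDual r)) = Ici x := by
    ext z
    simpa using forall_lt_imp_le_iff_le_of_dense
  rw [hI] at h
  exact (ENNReal.tendsto_toReal (measure_ne_top μ _)).comp h

lemma le_tailQ_iff {u : ℝ} (hu : u ∈ Ioo 0 1) {x : ℝ} : x ≤ tailQ μ u ↔ u ≤ tailFn μ x := by
  have hne : {z | tailFn μ z < u}.Nonempty :=
    ((tendsto_tailFn_atTop μ).eventually (gt_mem_nhds hu.1)).exists
  obtain ⟨x₀, hx₀⟩ := ((tendsto_tailFn_atBot μ).eventually (lt_mem_nhds hu.2)).exists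
  have hbdd : BddBelow {z | tailFn μ z < u} := ⟨x₀, fun z hz =>
    le_of_not_gt fun hzx => ((antitone_tailFn μ hzx.le).trans_lt hz).not_gt hx₀⟩
  constructor
  · intro hx
    by_contra! hlt
    obtain ⟨z, hz, hzx⟩ :=
      (((tendsto_tailFn_nhdsLT μ x).eventually (gt_mem_nhds hlt)).and self_mem_nhdsWithin).exists
    exact ((csInf_le hbdd hz).trans_lt hzx).not_ge hx
  · intro hx
    exact le_csInf hne fun z hz =>
      le_of_not_gt fun hzx => ((antitone_tailFn μ hzx.le).trans_lt hz).not_ge hx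

lemma tailQ_antitoneOn : AntitoneOn (tailQ μ) (Ioo 0 1) := fun _ hu _ hv huv =>
  (le_tailQ_iff μ hu).2 (huv.trans ((le_tailQ_iff μ hv).1 le_rfl))

lemma aemeasurable_tailQ : AEMeasurable (tailQ μ) (volume.restrict (Ioo 0 1)) :=
  aemeasurable_restrict_of_antitoneOn measurableSet_Ioo (tailQ_antitoneOn μ)

theorem map_tailQ : (volume.restrict (Ioo 0 1)).map (tailQ μ) = μ := by
  refine Measure.ext_of_Ici _ _ fun x => ?_
  rw [Measure.map_apply_of_aemeasurable (aemeasurable_tailQ μ) measurableSet_Ici,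
    volume_restrict_Ioo_apply_eq_ofReal (A := tailQ μ ⁻¹' Ici x) (tailFn_le_one μ x)
      fun u hu => le_tailQ_iff μ hu, tailFn, ENNReal.ofReal_toReal (measure_ne_top μ _)]

lemma integrableOn_tailQ (hμ : Integrable id μ) : IntegrableOn (tailQ μ) (Ioo 0 1) :=
  (integrable_map_measure aestronglyMeasurable_id (aemeasurable_tailQ μ)).1
    ((map_tailQ μ).symm ▸ hμ)

lemma callFn_eq_integral_tailQ (K : ℝ) :
    callFn μ K = ∫ u in Ioo 0 1, max (tailQ μ u - K) 0 := by
  have h := callFn_map (aemeasurable_tailQ μ) K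
  rwa [map_tailQ] at h

end Quantile

lemma mul_avar (μ : Measure ℝ) {l : ℝ} (hl : 0 < l) :
    l * avar μ l = ∫ u in Ioc 0 l, tailQ μ u := by
  rw [avar, intervalIntegral.integral_of_le hl.le]
  field_simp

lemma bddBelow_callFn_div (μ : Measure ℝ) (y : ℝ) :
    BddBelow (range fun K : Iio y => callFn μ K / (y - K)) :=
  ⟨0, forall_mem_range.2 fun K => div_nonneg (callFn_nonneg μ K) (sub_nonneg.2 K.2.le)⟩

section AVaR
variable (μ : Measure ℝ) [IsProbabilityMeasure μ]

lemma integral_Ioc_tailQ_sub (hμ : Integrable id μ) {l : ℝ} (hl : l ∈ Ioo 0 1) (K : ℝ) :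
    ∫ u in Ioc 0 l, (tailQ μ u - K) = (∫ u in Ioc 0 l, tailQ μ u) - l * K := by
  have hQ : IntegrableOn (tailQ μ) (Ioc 0 l) :=
    (integrableOn_tailQ μ hμ).mono_set (Ioc_subset_Ioo_right hl.2)
  rw [integral_sub hQ (integrableOn_const (by simp)), setIntegral_const,
    Real.volume_real_Ioc_of_le hl.1.le, smul_eq_mul, sub_zero]

lemma integral_Ioc_tailQ_sub_le_callFn (hμ : Integrable id μ) {l : ℝ} (hl : l ∈ Ioo 0 1)
    (K : ℝ) : (∫ u in Ioc 0 l, tailQ μ u) - l * K ≤ callFn μ K := by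
  have hint : IntegrableOn (fun u => tailQ μ u - K) (Ioo 0 1) :=
    (integrableOn_tailQ μ hμ).sub (integrableOn_const (by simp))
  have hpos : IntegrableOn (fun u => max (tailQ μ u - K) 0) (Ioo 0 1) := hint.pos_part
  have hsub : Ioc 0 l ⊆ Ioo 0 1 := Ioc_subset_Ioo_right hl.2
  rw [← integral_Ioc_tailQ_sub μ hμ hl, callFn_eq_integral_tailQ]
  calc ∫ u in Ioc 0 l, (tailQ μ u - K)
      ≤ ∫ u in Ioc 0 l, max (tailQ μ u - K) 0 :=
        setIntegral_mono_on (hint.mono_set hsub) (hpos.mono_set hsub) measurableSet_Ioc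
          fun _ _ => le_max_left _ _
    _ ≤ ∫ u in Ioo 0 1, max (tailQ μ u - K) 0 :=
        setIntegral_mono_set hpos (.of_forall fun _ => le_max_right _ _)
          hsub.eventuallyLE

lemma callFn_tailQ (hμ : Integrable id μ) {l : ℝ} (hl : l ∈ Ioo 0 1) :
    callFn μ (tailQ μ l) = (∫ u in Ioc 0 l, tailQ μ u) - l * tailQ μ l := by
  rw [← integral_Ioc_tailQ_sub μ hμ hl, callFn_eq_integral_tailQ,
    setIntegral_eq_of_subset_of_forall_sdiff_eq_zero measurableSet_Ioo (Ioc_subset_Ioo_right hl.2)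
      fun u hu => max_eq_right (sub_nonpos.2 (tailQ_antitoneOn μ hl hu.1
        (le_of_not_ge fun hul => hu.2 ⟨hu.1.1, hul⟩)))]
  exact setIntegral_congr_fun measurableSet_Ioc fun u hu => max_eq_left (sub_nonneg.2
    (tailQ_antitoneOn μ ⟨hu.1, hu.2.trans_lt hl.2⟩ hl hu.2))

lemma avar_le_add_callFn_div (hμ : Integrable id μ) {l : ℝ} (hl : l ∈ Ioo 0 1) (K : ℝ) :
    avar μ l ≤ K + callFn μ K / l := by
  have h := integral_Ioc_tailQ_sub_le_callFn μ hμ hl K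
  rw [← mul_avar μ hl.1] at h
  rw [← sub_le_iff_le_add', le_div_iff₀ hl.1]
  linarith

lemma avar_eq_tailQ_add_callFn_div (hμ : Integrable id μ) {l : ℝ} (hl : l ∈ Ioo 0 1) :
    avar μ l = tailQ μ l + callFn μ (tailQ μ l) / l := by
  rw [callFn_tailQ μ hμ hl, ← mul_avar μ hl.1, sub_div, mul_div_cancel_left₀ _ hl.1.ne',
    mul_div_cancel_left₀ _ hl.1.ne']
  ring

lemma avar_antitoneOn (hμ : Integrable id μ) : AntitoneOn (avar μ) (Ioo 0 1) := by
  intro a ha b hb hab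
  calc avar μ b ≤ tailQ μ a + callFn μ (tailQ μ a) / b := avar_le_add_callFn_div μ hμ hb _
    _ ≤ tailQ μ a + callFn μ (tailQ μ a) / a := by
        gcongr
        · exact callFn_nonneg μ _
        · exact ha.1
    _ = avar μ a := (avar_eq_tailQ_add_callFn_div μ hμ ha).symm

lemma le_avar_iff (hμ : Integrable id μ) {l : ℝ} (hl : l ∈ Ioo 0 1) (y : ℝ) :
    y ≤ avar μ l ↔ l ≤ ⨅ K : Iio y, callFn μ K / (y - K) := by
  constructor
  · intro h
    refine le_ciInf fun K => ?_
    have hK := h.trans (avar_le_add_callFn_div μ hμ hl K)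
    rw [← sub_le_iff_le_add', le_div_iff₀ hl.1] at hK
    rw [le_div_iff₀ (sub_pos.2 K.2)]
    linarith
  · intro h
    by_contra! hlt
    rw [avar_eq_tailQ_add_callFn_div μ hμ hl] at hlt
    have hC := div_nonneg (callFn_nonneg μ (tailQ μ l)) hl.1.le
    have hKy : tailQ μ l < y := by linarith
    rw [← lt_sub_iff_add_lt', div_lt_iff₀ hl.1] at hlt
    have hlt' : callFn μ (tailQ μ l) / (y - tailQ μ l) < l := by
      rw [div_lt_iff₀ (sub_pos.2 hKy)]
      linarith
    exact (h.trans (ciInf_le (bddBelow_callFn_div μ y) ⟨_, hKy⟩)).not_gt hlt'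

end AVaR

lemma iInf_callFn_div_nonneg (μ : Measure ℝ) (y : ℝ) :
    0 ≤ ⨅ K : Iio y, callFn μ K / (y - K) :=
  le_ciInf fun K => div_nonneg (callFn_nonneg μ K) (sub_nonneg.2 K.2.le)

lemma iInf_callFn_div_le_one (μ : Measure ℝ) [IsProbabilityMeasure μ] (hμ : Integrable id μ)
    (y : ℝ) : ⨅ K : Iio y, callFn μ K / (y - K) ≤ 1 := by
  set a := ∫ s, |s| ∂μ
  have hμ' : Integrable (fun s : ℝ => s) μ := hμ
  have hC : ∀ K ≤ 0, callFn μ K ≤ a - K := fun K hK => by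
    have h : ∫ s, (|s| - K) ∂μ = a - K := by
      rw [integral_sub hμ'.abs (integrable_const K)]
      simp [a]
    rw [callFn, ← h]
    exact integral_mono (hμ'.sub (integrable_const K)).pos_part (hμ'.abs.sub (integrable_const K))
      fun s => max_le (by linarith [le_abs_self s]) (by linarith [abs_nonneg s])
  have hlim : Tendsto (fun K => (a - K) / (y - K)) atBot (𝓝 1) := by
    have h₁ : Tendsto (fun K : ℝ => y - K) atBot atTop := by
      simpa [neg_add_eq_sub] using tendsto_neg_atBot_atTop.atTop_add (tendsto_const_nhds (x := y))
    have h₂ := (tendsto_const_nhds (x := a - y)).div_atTop h₁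
    have h₃ : Tendsto (fun K => 1 + (a - y) / (y - K)) atBot (𝓝 1) := by
      simpa using (tendsto_const_nhds (x := (1 : ℝ))).add h₂
    refine h₃.congr' ?_
    filter_upwards [eventually_lt_atBot y] with K hK
    field_simp [(sub_pos.2 hK).ne']
    ring
  refine ge_of_tendsto hlim ?_
  filter_upwards [eventually_le_atBot 0, eventually_lt_atBot y] with K hK₀ hKy
  exact (ciInf_le (bddBelow_callFn_div μ y) ⟨K, hKy⟩).trans
    (div_le_div_of_nonneg_right (hC K hK₀) (sub_pos.2 hKy).le)

theorem hlTransform_Ici (μ : Measure ℝ) [IsProbabilityMeasure μ] (hμ : Integrable id μ) (y : ℝ) :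
    (hlTransform μ (Ici y)).toReal = ⨅ K : Iio y, callFn μ K / (y - K) := by
  rw [hlTransform, Measure.restrict_congr_set Ioo_ae_eq_Ioc.symm,
    Measure.map_apply_of_aemeasurable
      (aemeasurable_restrict_of_antitoneOn measurableSet_Ioo (avar_antitoneOn μ hμ))
      measurableSet_Ici,
    volume_restrict_Ioo_apply_eq_ofReal (A := avar μ ⁻¹' Ici y) (iInf_callFn_div_le_one μ hμ y)
      fun l hl => le_avar_iff μ hμ hl y,
    ENNReal.toReal_ofReal (iInf_callFn_div_nonneg μ y)]

section Maximal
variable {Ω : Type*} {m : MeasurableSpace Ω} {ℙ : Measure Ω}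

lemma mul_measureReal_le_setIntegral_of_le_condExp [IsFiniteMeasure ℙ] {m' : MeasurableSpace Ω}
    (hm : m' ≤ m) {h : Ω → ℝ} (hh : Integrable h ℙ) {s : Set Ω} (hs : MeasurableSet[m'] s) {c : ℝ}
    (hc : ∀ᵐ ω ∂ℙ, ω ∈ s → c ≤ ℙ[h | m'] ω) :
    c * ℙ.real s ≤ ∫ ω in s, h ω ∂ℙ := by
  rw [← setIntegral_condExp hm hh hs, mul_comm, ← smul_eq_mul, ← setIntegral_const]
  exact setIntegral_mono_ae_restrict (integrableOn_const (measure_ne_top ℙ _))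
    integrable_condExp.integrableOn ((ae_restrict_iff' (hm s hs)).2 hc)

variable {ι : Type*} [LinearOrder ι]

def firstEntry (A : ι → Set Ω) (S : Finset ι) (t : ι) : Set Ω :=
  A t \ ⋃ s ∈ S.filter (· < t), A s

lemma pairwiseDisjoint_firstEntry (A : ι → Set Ω) (S : Finset ι) :
    (S : Set ι).PairwiseDisjoint (firstEntry A S) := by
  suffices ∀ s ∈ S, ∀ t, s < t → Disjoint (firstEntry A S s) (firstEntry A S t) from
    fun s hs t ht hst => hst.lt_or_gt.elim (this s hs t) fun h => (this t ht s h).symm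
  intro s hs t hst
  refine Set.disjoint_left.2 fun ω hωs hωt => hωt.2 ?_
  exact mem_iUnion₂.2 ⟨s, Finset.mem_filter.2 ⟨hs, hst⟩, hωs.1⟩

lemma biUnion_firstEntry (A : ι → Set Ω) (S : Finset ι) :
    ⋃ t ∈ S, firstEntry A S t = ⋃ t ∈ S, A t := by
  classical
  refine subset_antisymm (iUnion₂_mono fun t _ => sdiff_subset) fun ω hω => ?_
  obtain ⟨t, htS, hωt⟩ := mem_iUnion₂.1 hω
  have hT : (S.filter (ω ∈ A ·)).Nonempty := ⟨t, Finset.mem_filter.2 ⟨htS, hωt⟩⟩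
  obtain ⟨ht₀S, hωt₀⟩ := Finset.mem_filter.1 ((S.filter (ω ∈ A ·)).min'_mem hT)
  refine mem_iUnion₂.2 ⟨_, ht₀S, hωt₀, fun hω' => ?_⟩
  obtain ⟨s, hs, hωs⟩ := mem_iUnion₂.1 hω'
  obtain ⟨hsS, hst₀⟩ := Finset.mem_filter.1 hs
  exact hst₀.not_ge (Finset.min'_le _ s (Finset.mem_filter.2 ⟨hsS, hωs⟩))

theorem mul_measureReal_biUnion_lt_le_integral [IsFiniteMeasure ℙ] {𝒢 : Filtration ι m}
    {X : ι → Ω → ℝ} (hX : StronglyAdapted 𝒢 X) {h : Ω → ℝ} (hh : Integrable h ℙ)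
    (hh₀ : 0 ≤ᵐ[ℙ] h) (hXh : ∀ t, X t ≤ᵐ[ℙ] ℙ[h | 𝒢 t]) (c : ℝ) (S : Finset ι) :
    c * ℙ.real (⋃ t ∈ S, {ω | c < X t ω}) ≤ ∫ ω, h ω ∂ℙ := by
  set A : ι → Set Ω := fun t => {ω | c < X t ω}
  have hA : ∀ s t, s ≤ t → MeasurableSet[𝒢 t] (A s) := fun s t hst =>
    𝒢.mono hst _ ((hX s).measurable measurableSet_Ioi)
  have hB : ∀ t, MeasurableSet[𝒢 t] (firstEntry A S t) := fun t =>
    (hA t t le_rfl).diff (Finset.measurableSet_biUnion _ fun s hs =>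
      hA s t (Finset.mem_filter.1 hs).2.le)
  rw [← biUnion_firstEntry, measureReal_biUnion_finset (pairwiseDisjoint_firstEntry A S)
    fun t _ => 𝒢.le t _ (hB t), Finset.mul_sum]
  calc ∑ t ∈ S, c * ℙ.real (firstEntry A S t) ≤ ∑ t ∈ S, ∫ ω in firstEntry A S t, h ω ∂ℙ :=
        Finset.sum_le_sum fun t _ => mul_measureReal_le_setIntegral_of_le_condExp (𝒢.le t) hh
          (hB t) ((hXh t).mono fun ω hω hωB => hωB.1.le.trans hω)
    _ = ∫ ω in ⋃ t ∈ S, firstEntry A S t, h ω ∂ℙ :=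
        (integral_biUnion_finset S (fun t _ => 𝒢.le t _ (hB t)) (pairwiseDisjoint_firstEntry A S)
          fun t _ => hh.integrableOn).symm
    _ ≤ ∫ ω, h ω ∂ℙ := setIntegral_le_integral hh hh₀

end Maximal

section ContinuousTime
variable {Ω : Type*} {m : MeasurableSpace Ω} {ℙ : Measure Ω} [IsFiniteMeasure ℙ]
  {𝒢 : Filtration ℝ≥0 m}

theorem measure_iUnion_lt_le_ofReal_integral_div {X : ℝ≥0 → Ω → ℝ} (hX : StronglyAdapted 𝒢 X)
    (hrc : ∀ ω t, ContinuousWithinAt (fun s => X s ω) (Ici t) t) {h : Ω → ℝ}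
    (hh : Integrable h ℙ) (hh₀ : 0 ≤ᵐ[ℙ] h) (hXh : ∀ t, X t ≤ᵐ[ℙ] ℙ[h | 𝒢 t]) {c : ℝ}
    (hc : 0 < c) :
    ℙ (⋃ t, {ω | c < X t ω}) ≤ ENNReal.ofReal ((∫ ω, h ω ∂ℙ) / c) := by
  set e := TopologicalSpace.denseSeq ℝ≥0
  set U : Finset ℕ → Set Ω := fun F => ⋃ t ∈ F.image e, {ω | c < X t ω}
  have hsub : ⋃ t, {ω | c < X t ω} ⊆ ⋃ F, U F := by
    refine iUnion_subset fun t ω hω => ?_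
    obtain ⟨u, hu, hIco⟩ := mem_nhdsGE_iff_exists_Ico_subset.1 ((hrc ω t) (Ioi_mem_nhds hω))
    obtain ⟨n, hn⟩ := (TopologicalSpace.denseRange_denseSeq ℝ≥0).exists_mem_open isOpen_Ioo
      (nonempty_Ioo.2 hu)
    exact mem_iUnion.2 ⟨{n}, mem_iUnion₂.2 ⟨e n, by simp, hIco ⟨hn.1.le, hn.2⟩⟩⟩
  have hU : Monotone U := fun F G hFG =>
    biUnion_subset_biUnion_left (Finset.coe_subset.2 (Finset.image_subset_image hFG))
  calc ℙ (⋃ t, {ω | c < X t ω}) ≤ ℙ (⋃ F, U F) := measure_mono hsub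
    _ = ⨆ F, ℙ (U F) := hU.directed_le.measure_iUnion
    _ ≤ _ := iSup_le fun F => by
        rw [← ofReal_measureReal (measure_ne_top ℙ _)]
        refine ENNReal.ofReal_le_ofReal ((le_div_iff₀ hc).2 ?_)
        rw [mul_comm]
        exact mul_measureReal_biUnion_lt_le_integral hX hh hh₀ hXh c _

end ContinuousTime

section ClosedMartingale
variable {Ω : Type*} {m : MeasurableSpace Ω} {ℙ : Measure Ω} [IsFiniteMeasure ℙ]

lemma max_sub_le_condExp_max_sub {m' : MeasurableSpace Ω} (hm : m' ≤ m) {Y Z : Ω → ℝ}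
    (hY : Integrable Y ℙ) (hZ : Z =ᵐ[ℙ] ℙ[Y | m']) (K : ℝ) :
    (fun ω => max (Z ω - K) 0) ≤ᵐ[ℙ] ℙ[fun ω => max (Y ω - K) 0 | m'] := by
  have hYK : Integrable (fun ω => Y ω - K) ℙ := hY.sub (integrable_const K)
  have h₁ := condExp_sub hY (integrable_const K) m'
  rw [condExp_const hm] at h₁
  have h₂ : ℙ[fun ω => Y ω - K | m'] ≤ᵐ[ℙ] ℙ[fun ω => max (Y ω - K) 0 | m'] :=
    condExp_mono hYK hYK.pos_part (.of_forall fun ω => le_max_left _ _)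
  have h₃ : 0 ≤ᵐ[ℙ] ℙ[fun ω => max (Y ω - K) 0 | m'] :=
    condExp_nonneg (.of_forall fun ω => le_max_right _ _)
  filter_upwards [hZ, h₁, h₂, h₃] with ω hZω h₁ω h₂ω h₃ω
  refine max_le ?_ h₃ω
  rw [hZω]
  exact h₁ω.symm.trans_le h₂ω

variable {𝒢 : Filtration ℝ≥0 m} {P : ℝ≥0 → Ω → ℝ} {Y : Ω → ℝ}

theorem measure_iUnion_lt_le_callFn_div (hP : StronglyAdapted 𝒢 P)
    (hrc : ∀ ω t, ContinuousWithinAt (fun s => P s ω) (Ici t) t) (hY : Integrable Y ℙ)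
    (hclosed : ∀ t, P t =ᵐ[ℙ] ℙ[Y | 𝒢 t]) {K y : ℝ} (hKy : K < y) :
    ℙ (⋃ t, {ω | y < P t ω}) ≤ ENNReal.ofReal (callFn (ℙ.map Y) K / (y - K)) := by
  have hsets : ∀ t, {ω | y < P t ω} = {ω | y - K < max (P t ω - K) 0} := fun t => by
    ext ω
    simp only [mem_ofPred_eq, lt_max_iff, sub_lt_sub_iff_right, sub_neg, hKy.not_gt, or_false]
  rw [iUnion_congr hsets, callFn_map hY.aemeasurable]
  exact measure_iUnion_lt_le_ofReal_integral_div
    (fun t => (((hP t).measurable.sub_const K).max measurable_const).stronglyMeasurable)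
    (fun ω t => ((hrc ω t).sub continuousWithinAt_const).max continuousWithinAt_const)
    (hY.sub (integrable_const K)).pos_part (.of_forall fun _ => le_max_right _ _)
    (fun t => max_sub_le_condExp_max_sub (𝒢.le t) hY (hclosed t) K) (sub_pos.2 hKy)

theorem measure_le_iSup_le_callFn_div (hP : StronglyAdapted 𝒢 P)
    (hrc : ∀ ω t, ContinuousWithinAt (fun s => P s ω) (Ici t) t) (hY : Integrable Y ℙ)
    (hclosed : ∀ t, P t =ᵐ[ℙ] ℙ[Y | 𝒢 t]) {K y : ℝ} (hKy : K < y) :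
    ℙ {ω | y ≤ ⨆ t, P t ω} ≤ ENNReal.ofReal (callFn (ℙ.map Y) K / (y - K)) := by
  have hcont : Tendsto (fun y' => ENNReal.ofReal (callFn (ℙ.map Y) K / (y' - K))) (𝓝[<] y)
      (𝓝 (ENNReal.ofReal (callFn (ℙ.map Y) K / (y - K)))) :=
    (ENNReal.continuous_ofReal.tendsto _).comp
      ((continuousAt_const.div (continuousAt_id.sub continuousAt_const)
        (sub_ne_zero.2 hKy.ne')).tendsto.mono_left nhdsWithin_le_nhds)
  refine ge_of_tendsto hcont ?_
  filter_upwards [Ioo_mem_nhdsLT hKy] with y' ⟨hKy', hy'y⟩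
  refine (measure_mono fun ω hω => ?_).trans
    (measure_iUnion_lt_le_callFn_div hP hrc hY hclosed hKy')
  by_contra hω'
  simp only [mem_iUnion, mem_ofPred_eq, not_exists, not_lt] at hω'
  exact (ciSup_le hω').not_gt (hy'y.trans_le hω)

end ClosedMartingale

theorem stmt_17_general {Ω : Type*} {m : MeasurableSpace Ω} {ℙ : Measure Ω}
    [IsProbabilityMeasure ℙ] (𝒢 : Filtration ℝ≥0 m) (P : ℝ≥0 → Ω → ℝ)
    (hmart : Martingale P 𝒢 ℙ)
    (hrc : ∀ ω, ∀ t : ℝ≥0, ContinuousWithinAt (fun s => P s ω) (Ici t) t)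
    (Pinf : Ω → ℝ)
    (hclosed : ∀ t : ℝ≥0, P t =ᵐ[ℙ] ℙ[Pinf | 𝒢 t])
    (μ : Measure ℝ) [IsProbabilityMeasure μ] (hμ : Integrable id μ)
    (hlaw : Measure.map Pinf ℙ = μ) :
    ∀ y : ℝ, 0 < y → 0 < μ (Ioi y) →
      ℙ {ω | y ≤ ⨆ t : ℝ≥0, P t ω} ≤
        ENNReal.ofReal (⨅ K : Iio y, callFn μ (K : ℝ) / (y - (K : ℝ))) ∧
      ⨅ K : Iio y, callFn μ (K : ℝ) / (y - (K : ℝ)) = (hlTransform μ (Ici y)).toReal := by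
  intro y _ _
  have hPinf : AEMeasurable Pinf ℙ := .of_map_ne_zero (hlaw ▸ IsProbabilityMeasure.ne_zero μ)
  have hPinf_int : Integrable Pinf ℙ :=
    (integrable_map_measure aestronglyMeasurable_id hPinf).1 (hlaw ▸ hμ)
  have hK : ∀ K : Iio y, ℙ {ω | y ≤ ⨆ t, P t ω} ≤ ENNReal.ofReal (callFn μ K / (y - K)) :=
    fun K => hlaw ▸ measure_le_iSup_le_callFn_div hmart.stronglyAdapted hrc hPinf_int hclosed K.2
  refine ⟨?_, (hlTransform_Ici μ hμ y).symm⟩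
  rw [← ofReal_measureReal (measure_ne_top ℙ _)]
  exact ENNReal.ofReal_le_ofReal (le_ciInf fun K => ENNReal.toReal_le_of_le_ofReal
    (div_nonneg (callFn_nonneg μ K) (sub_nonneg.2 K.2.le)) (hK K))

theorem stmt_17 {Ω : Type*} {m : MeasurableSpace Ω} {ℙ : Measure Ω}
    [IsProbabilityMeasure ℙ] (𝒢 : Filtration ℝ≥0 m) (P : ℝ≥0 → Ω → ℝ)
    (hmart : Martingale P 𝒢 ℙ)
    (hrc : ∀ ω, ∀ t : ℝ≥0, ContinuousWithinAt (fun s => P s ω) (Ici t) t)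
    (hll : ∀ ω, ∀ t : ℝ≥0, 0 < t → ∃ l : ℝ,
      Tendsto (fun s => P s ω) (nhdsWithin t (Iio t)) (nhds l))
    (hUI : UniformIntegrable P 1 ℙ)
    (Pinf : Ω → ℝ) (hPinf : ∀ᵐ ω ∂ℙ, Tendsto (fun t => P t ω) atTop (nhds (Pinf ω)))
    (hclosed : ∀ t : ℝ≥0, P t =ᵐ[ℙ] ℙ[Pinf | 𝒢 t])
    (μ : Measure ℝ) [IsProbabilityMeasure μ] (hμ : Integrable id μ)
    (hlaw : Measure.map Pinf ℙ = μ) :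
    ∀ y : ℝ, 0 < y → 0 < μ (Ioi y) →
      ℙ {ω | y ≤ ⨆ t : ℝ≥0, P t ω} ≤
        ENNReal.ofReal (⨅ K : Iio y, callFn μ (K : ℝ) / (y - (K : ℝ))) ∧
      ⨅ K : Iio y, callFn μ (K : ℝ) / (y - (K : ℝ)) = (hlTransform μ (Ici y)).toReal :=
  stmt_17_general 𝒢 P hmart hrc Pinf hclosed μ hμ hlaw
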